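/- arXiv:1811.05733 — 2 statements merged into one kernel-verified Lean document; each statement's English description precedes it below -/
import Mathlib

section
/- If h₁,…,h_n are positive semidefinite Hermitian n×n matrices, then the mixed determinant D(h₁,…,h_n) is non-negative. -/
/-! Inclusion–exclusion over the subsets `S` turns the alternating sum defining the mixed
determinant into `(n!)⁻¹ ∑_σ det M_σ`, where row `i` of `M_σ` is row `i` of `h (σ i)`. Writing
`h k = (A k)ᴴ * A k`, each row of `M_σ` is a combination of rows of the matrices `A k`; expanding
by multilinearity and averaging over the `n!` reorderings of the chosen rows gives
`n! ∑_σ det M_σ = ∑_{σ, g} |det N_{σ,g}|²`, where row `i` of `N_{σ,g}` is row `g i` of `A (σ i)`. -/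

open scoped ComplexOrder

open Finset

/-- The mixed determinant: the polarization of `det`. -/
noncomputable def mixedDet (n : ℕ) (h : Fin n → Matrix (Fin n) (Fin n) ℂ) : ℂ :=
  (n.factorial : ℂ)⁻¹ *
    ∑ S ∈ Finset.univ.powerset.filter Finset.Nonempty,
      (-1 : ℂ) ^ (n - S.card) * (∑ i ∈ S, h i).det

open Function Fintype Equiv
open scoped Nat

theorem Finset.sum_filter_surjective_eq_sum_piFinset_compl {α β G : Type*} [Fintype α]
    [DecidableEq α] [Fintype β] [DecidableEq β] [AddCommGroup G] (g : (α → β) → G) :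
    ∑ f with Surjective f, g f = ∑ t : Finset β, (-1 : ℤ) ^ #t • ∑ f ∈ piFinset fun _ ↦ tᶜ, g f := by
  have mem_inf {t : Finset β} {S : β → Finset (α → β)} {f : α → β} :
      f ∈ t.inf S ↔ ∀ b ∈ t, f ∈ S b := by
    simp only [← singleton_subset_iff, Finset.le_inf_iff]
  convert inclusion_exclusion_sum_inf_compl univ (fun b ↦ {f : α → β | ∀ a, f a ≠ b}) g using 2
  · ext f
    rw [mem_filter, mem_inf]
    simp [Surjective]
  · rw [powerset_univ]
  · congr 2
    ext f
    rw [mem_piFinset, mem_inf]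
    simp only [mem_compl, mem_filter, mem_univ, true_and]
    grind

theorem Fintype.sum_filter_surjective_eq_sum_perm {ι M : Type*} [Fintype ι] [DecidableEq ι]
    [AddCommMonoid M] (g : (ι → ι) → M) :
    ∑ f with Surjective f, g f = ∑ σ : Perm ι, g σ := by
  refine (sum_nbij (fun σ : Perm ι ↦ (σ : ι → ι)) (fun σ _ ↦ ?_)
    (fun σ _ τ _ ↦ DFunLike.coe_injective.eq_iff.mp) (fun f hf ↦ ?_) fun _ _ ↦ rfl).symm
  · simp [σ.surjective]
  · simp only [coe_filter, mem_univ, true_and, Set.mem_ofPred_eq] at hf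
    exact ⟨Equiv.ofBijective f (Finite.surjective_iff_bijective.mp hf), by simp, rfl⟩

namespace Matrix

variable {ι κ m R : Type*} [Fintype ι] [DecidableEq ι] [CommRing R]

def mixRows (h : κ → Matrix ι ι R) (f : ι → κ) : Matrix ι ι R :=
  of fun i ↦ h (f i) i

theorem det_of_sum_finset (v : ι → κ → ι → R) (s : ι → Finset κ) :
    det (of fun i ↦ ∑ k ∈ s i, v i k) = ∑ g ∈ piFinset s, det (of fun i ↦ v i (g i)) :=
  (detRowAlternating : (ι → R) [⋀^ι]→ₗ[R] R).map_sum_finset v s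

theorem det_sum_finset (h : κ → Matrix ι ι R) (S : Finset κ) :
    det (∑ k ∈ S, h k) = ∑ f ∈ piFinset fun _ ↦ S, det (mixRows h f) := by
  convert det_of_sum_finset (fun i k ↦ h k i) (fun _ ↦ S) using 2
  · ext i j
    simp [Matrix.sum_apply]
  · rfl

theorem sum_powerset_neg_one_pow_mul_det_sum (h : ι → Matrix ι ι R) :
    ∑ S : Finset ι, (-1 : R) ^ (card ι - #S) * det (∑ i ∈ S, h i)
      = ∑ σ : Perm ι, det (mixRows h σ) := by
  rw [← Fintype.sum_filter_surjective_eq_sum_perm fun f ↦ det (mixRows h f),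
    Finset.sum_filter_surjective_eq_sum_piFinset_compl,
    ← Equiv.sum_comp (compl_involutive.toPerm _)]
  refine sum_congr rfl fun t _ ↦ ?_
  rw [Involutive.coe_toPerm, card_compl, Nat.sub_sub_self (card_le_univ t), det_sum_finset,
    zsmul_eq_mul, Int.cast_pow, Int.cast_neg, Int.cast_one]

variable [StarRing R]

theorem sum_perm_star_prod_mul_det_submatrix (M : Matrix ι ι R) :
    ∑ π : Perm ι, star (∏ i, M (π i) i) * det (M.submatrix π id) = star (det M) * det M := by
  calc ∑ π : Perm ι, star (∏ i, M (π i) i) * det (M.submatrix π id)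
      = (∑ π : Perm ι, star (Perm.sign π • ∏ i, M (π i) i)) * det M := by
        rw [sum_mul]
        refine sum_congr rfl fun π _ ↦ ?_
        rw [det_permute, Units.smul_def, zsmul_eq_mul, star_mul', star_intCast]
        ring
    _ = star (det M) * det M := by rw [det_apply M, star_sum]

variable [Fintype m]

theorem det_mixRows_conjTranspose_mul_self (A : ι → Matrix m ι R) (σ : ι → ι) :
    det (mixRows (fun k ↦ (A k)ᴴ * A k) σ)
      = ∑ g : ι → m, star (∏ i, A (σ i) (g i) i) * det (of fun i ↦ A (σ i) (g i)) := by
  have rows : mixRows (fun k ↦ (A k)ᴴ * A k) σ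
      = of fun i ↦ ∑ r, star (A (σ i) r i) • A (σ i) r := by
    ext i j
    simp [mixRows, mul_apply, Finset.sum_apply, mul_comm]
  rw [rows, det_of_sum_finset, ← piFinset_univ]
  refine sum_congr rfl fun g _ ↦ ?_
  rw [star_prod, ← det_mul_column]
  rfl

theorem factorial_mul_sum_perm_det_mixRows_conjTranspose_mul_self (A : ι → Matrix m ι R) :
    ((card ι)! : R) * ∑ σ : Perm ι, det (mixRows (fun k ↦ (A k)ᴴ * A k) σ)
      = ∑ σ : Perm ι, ∑ g : ι → m,
          star (det (of fun i ↦ A (σ i) (g i))) * det (of fun i ↦ A (σ i) (g i)) := by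
  let t : Perm ι → (ι → m) → R := fun σ g ↦
    star (∏ i, A (σ i) (g i) i) * det (of fun i ↦ A (σ i) (g i))
  calc ((card ι)! : R) * ∑ σ : Perm ι, det (mixRows (fun k ↦ (A k)ᴴ * A k) σ)
      = ∑ _π : Perm ι, ∑ σ : Perm ι, ∑ g, t σ g := by
        simp_rw [sum_const, card_univ, card_perm, nsmul_eq_mul, t,
          det_mixRows_conjTranspose_mul_self]
    -- `(σ, g) ↦ (σ * π, g ∘ π)` permutes the rows of `of fun i ↦ A (σ i) (g i)` by `π`
    _ = ∑ π : Perm ι, ∑ σ : Perm ι, ∑ g, t (σ * π) (g ∘ π) := by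
        refine sum_congr rfl fun π _ ↦ ?_
        rw [← Equiv.sum_comp (Equiv.mulRight π)]
        exact sum_congr rfl fun σ _ ↦ (Equiv.sum_comp (π.symm.arrowCongr (Equiv.refl m)) _).symm
    _ = ∑ σ : Perm ι, ∑ g, ∑ π : Perm ι, t (σ * π) (g ∘ π) := by
        rw [sum_comm]
        exact sum_congr rfl fun σ _ ↦ sum_comm
    _ = _ := by
        refine sum_congr rfl fun σ _ ↦ sum_congr rfl fun g _ ↦ ?_
        exact sum_perm_star_prod_mul_det_submatrix (of fun i ↦ A (σ i) (g i))

theorem sum_perm_det_mixRows_nonneg {𝕜 : Type*} [RCLike 𝕜] (h : ι → Matrix ι ι 𝕜)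
    (hh : ∀ k, (h k).PosSemidef) :
    0 ≤ ∑ σ : Perm ι, det (mixRows h σ) := by
  obtain ⟨A, rfl⟩ : ∃ A : ι → Matrix ι ι 𝕜, h = fun k ↦ (A k)ᴴ * A k := by
    open scoped MatrixOrder in
    choose A hA using fun k ↦ CStarAlgebra.nonneg_iff_eq_star_mul_self.mp (hh k).nonneg
    exact ⟨A, funext hA⟩
  rw [← inv_mul_cancel_left₀ (Nat.cast_ne_zero.mpr (card ι).factorial_ne_zero)
    (∑ σ : Perm ι, _), factorial_mul_sum_perm_det_mixRows_conjTranspose_mul_self]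
  exact mul_nonneg (inv_nonneg.mpr (Nat.cast_nonneg _)) <| sum_nonneg fun σ _ ↦ sum_nonneg fun g _ ↦ star_mul_self_nonneg _

end Matrix

open Matrix

theorem mixedDet_eq_inv_factorial_mul_sum_perm {n : ℕ} (hn : 0 < n)
    (h : Fin n → Matrix (Fin n) (Fin n) ℂ) :
    mixedDet n h = (n ! : ℂ)⁻¹ * ∑ σ : Perm (Fin n), det (mixRows h σ) := by
  have : Nonempty (Fin n) := ⟨⟨0, hn⟩⟩
  rw [mixedDet, ← sum_powerset_neg_one_pow_mul_det_sum, Fintype.card_fin, ← powerset_univ,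
    sum_filter_of_ne]
  rintro S - hS
  rw [nonempty_iff_ne_empty]
  rintro rfl
  simp at hS

theorem mixedDet_nonneg (n : ℕ) (h : Fin n → Matrix (Fin n) (Fin n) ℂ)
    (hpsd : ∀ i, (h i).PosSemidef) : 0 ≤ mixedDet n h := by
  rcases n.eq_zero_or_pos with rfl | hn
  · simp [mixedDet]
  · rw [mixedDet_eq_inv_factorial_mul_sum_perm hn]
    exact mul_nonneg (inv_nonneg.mpr (Nat.cast_nonneg _)) (sum_perm_det_mixRows_nonneg h hpsd)

/-- The mixed determinant of positive semidefinite Hermitian matrices is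
a non-negative real number. -/
theorem stmt6 (n : ℕ) (h : Fin n → Matrix (Fin n) (Fin n) ℂ)
    (hpsd : ∀ i, (h i).PosSemidef) :
    0 ≤ (mixedDet n h).re ∧ (mixedDet n h).im = 0 := by
  obtain ⟨hre, him⟩ := Complex.nonneg_iff.mp (mixedDet_nonneg n h hpsd)
  exact ⟨hre, him.symm⟩
end

section
/- The mixed determinant of positive semidefinite Hermitian matrices is monotone: if h₁ ≤ h₁′ (i.e. h₁′ − h₁ is positive semidefinite) and h₂,…,h_n are positive semidefinite, then D(h₁,h₂,…,h_n) ≤ D(h₁′,h₂,…,h_n). -/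
open scoped ComplexOrder

open Finset

/-!
Expanding `det (∑ i ∈ S, h i)` multilinearly in the rows and summing the signs over `S` by
inclusion–exclusion leaves only the row choices that are permutations:
`n! · D(h) = ∑ σ, det (row r of h (σ r))`. This form is additive in each argument. Writing
`h i = (B i)ᴴ * B i` and expanding the rows once more, the sum over `σ` collapses to a sum of
`|det W|²` over the matrices `W` whose row `a` is some row of `B a`, so `D` is nonnegative on
positive semidefinite tuples, and `D(…, b, …) - D(…, a, …) = D(…, b - a, …) ≥ 0`.
-/

open scoped Matrix

section PermMixedDet

variable {ι R : Type*} [DecidableEq ι]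

def rowMix (h : ι → Matrix ι ι R) (f : ι → ι) : Matrix ι ι R :=
  Matrix.of fun r => h (f r) r

theorem rowMix_update (h : ι → Matrix ι ι R) (i : ι) (x : Matrix ι ι R) (σ : Equiv.Perm ι) :
    rowMix (Function.update h i x) σ = (rowMix h σ).updateRow (σ.symm i) (x (σ.symm i)) := by
  ext r c
  rcases eq_or_ne r (σ.symm i) with rfl | hr
  · simp [rowMix]
  · have hσ : σ r ≠ i := fun hc => hr (σ.eq_symm_apply.mpr hc)
    simp [rowMix, hr, hσ]

variable [Fintype ι] [CommRing R]

noncomputable def permMixedDet (h : ι → Matrix ι ι R) : R :=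
  ∑ σ : Equiv.Perm ι, (rowMix h σ).det

theorem permMixedDet_update_add (h : ι → Matrix ι ι R) (i : ι) (x y : Matrix ι ι R) :
    permMixedDet (Function.update h i (x + y)) =
      permMixedDet (Function.update h i x) + permMixedDet (Function.update h i y) := by
  simp only [permMixedDet, rowMix_update, ← sum_add_distrib]
  exact sum_congr rfl fun σ _ => Matrix.det_updateRow_add _ _ _ _

theorem det_sum_eq_sum_piFinset_det_rowMix (h : ι → Matrix ι ι R) (S : Finset ι) :
    (∑ i ∈ S, h i).det = ∑ f ∈ Fintype.piFinset fun _ => S, (rowMix h f).det := by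
  have hrows : ∑ i ∈ S, h i = fun r => ∑ i ∈ S, h i r := by
    ext r c
    simp [Matrix.sum_apply]
  rw [hrows]
  exact (Matrix.detRowAlternating : (ι → R) [⋀^ι]→ₗ[R] R).toMultilinearMap.map_sum_finset
    (fun r i => h i r) fun _ => S

theorem sum_superset_neg_one_pow_card_sub (T : Finset ι) :
    ∑ S : Finset ι, (if T ⊆ S then (-1 : R) ^ (Fintype.card ι - #S) else 0) =
      if T = univ then 1 else 0 := by
  rw [← Equiv.sum_comp (compl_involutive.toPerm _)]
  simp only [Function.Involutive.coe_toPerm, subset_compl_comm (s := T), card_compl,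
    Nat.sub_sub_self (card_le_univ _)]
  rw [← sum_filter, filter_subset_univ]
  simpa [apply_ite (Int.cast : ℤ → R)] using
    congrArg (Int.cast : ℤ → R) (sum_powerset_neg_one_pow_card (x := Tᶜ))

theorem sum_surjective_eq_sum_perm {M : Type*} [AddCommMonoid M] (g : (ι → ι) → M) :
    ∑ f : ι → ι, (if Function.Surjective f then g f else 0) = ∑ σ : Equiv.Perm ι, g σ := by
  rw [← sum_filter, ← Fintype.sum_equiv Equiv.bijectiveEquiv (fun f => g f.1) _
    fun _ => rfl, sum_subtype (p := Function.Bijective) _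
    fun f => by simp [Finite.surjective_iff_bijective]]

theorem sum_neg_one_pow_mul_det_sum (h : ι → Matrix ι ι R) :
    ∑ S : Finset ι, (-1 : R) ^ (Fintype.card ι - #S) * (∑ i ∈ S, h i).det =
      permMixedDet h := by
  have hrange : ∀ (f : ι → ι) (S : Finset ι), f ∈ Fintype.piFinset (fun _ => S) ↔
      univ.image f ⊆ S := by
    intro f S
    simp [Fintype.mem_piFinset, image_subset_iff]
  calc
    _ = ∑ S : Finset ι, ∑ f : ι → ι, if univ.image f ⊆ S then
          (-1 : R) ^ (Fintype.card ι - #S) * (rowMix h f).det else 0 := by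
      refine sum_congr rfl fun S _ => ?_
      rw [det_sum_eq_sum_piFinset_det_rowMix, mul_sum, ← sum_filter]
      exact sum_congr (by ext f; simp [hrange]) fun _ _ => rfl
    _ = ∑ f : ι → ι, (∑ S : Finset ι, if univ.image f ⊆ S then
          (-1 : R) ^ (Fintype.card ι - #S) else 0) * (rowMix h f).det := by
      rw [sum_comm]
      simp only [sum_mul, ite_mul, zero_mul]
    _ = ∑ f : ι → ι, if Function.Surjective f then (rowMix h f).det else 0 := by
      simp only [sum_superset_neg_one_pow_card_sub, ite_mul, one_mul, zero_mul,
        ← coe_eq_univ, coe_image, coe_univ, Set.image_univ, Set.range_eq_univ]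
    _ = permMixedDet h := sum_surjective_eq_sum_perm _

theorem det_of_sum_mul {κ : Type*} [Fintype κ] (x : ι → κ → R) (y : ι → κ → ι → R) :
    (Matrix.of fun r c => ∑ k, x r k * y r k c).det =
      ∑ K : ι → κ, (∏ r, x r (K r)) * (Matrix.of fun r => y r (K r)).det := by
  have hrows : (Matrix.of fun r c => ∑ k, x r k * y r k c) = fun r => ∑ k, x r k • y r k := by
    ext r c
    simp [Finset.sum_apply]
  let D := (Matrix.detRowAlternating : (ι → R) [⋀^ι]→ₗ[R] R).toMultilinearMap
  change D _ = ∑ K : ι → κ, (∏ r, x r (K r)) * D _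
  rw [hrows, D.map_sum]
  simp only [D.map_smul_univ, smul_eq_mul]
  rfl

theorem permMixedDet_conjTranspose_mul_self [StarRing R] (B : ι → Matrix ι ι R) :
    permMixedDet (fun i => (B i)ᴴ * B i) =
      ∑ κ : ι → ι,
        star (Matrix.of fun a => B a (κ a)).det * (Matrix.of fun a => B a (κ a)).det := by
  let W (κ : ι → ι) : Matrix ι ι R := Matrix.of fun a => B a (κ a)
  have hrow (σ : Equiv.Perm ι) : rowMix (fun i => (B i)ᴴ * B i) σ =
      Matrix.of fun r c => ∑ k, star (B (σ r) k r) * B (σ r) k c := by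
    ext r c
    simp [rowMix, Matrix.mul_apply]
  have hperm (σ : Equiv.Perm ι) (κ : ι → ι) :
      (Matrix.of fun r => B (σ r) (κ (σ r))).det = Equiv.Perm.sign σ * (W κ).det :=
    Matrix.det_permute σ (W κ)
  have hconj (κ : ι → ι) :
      ∑ σ : Equiv.Perm ι, Equiv.Perm.sign σ * ∏ r, star (W κ (σ r) r) = star (W κ).det := by
    rw [← Matrix.det_conjTranspose, ← Matrix.det_transpose, Matrix.det_apply']
    rfl
  calc permMixedDet (fun i => (B i)ᴴ * B i)
      = ∑ σ : Equiv.Perm ι, ∑ K : ι → ι,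
          (∏ r, star (B (σ r) (K r) r)) * (Matrix.of fun r => B (σ r) (K r)).det := by
        simp only [permMixedDet, hrow]
        exact sum_congr rfl fun σ _ => det_of_sum_mul _ _
    _ = ∑ σ : Equiv.Perm ι, ∑ κ : ι → ι,
          (∏ r, star (B (σ r) (κ (σ r)) r)) * (Matrix.of fun r => B (σ r) (κ (σ r))).det :=
        sum_congr rfl fun σ _ => Fintype.sum_equiv (σ.arrowCongr (Equiv.refl ι)) _ _
          fun K => by simp
    _ = ∑ κ : ι → ι, (∑ σ : Equiv.Perm ι, Equiv.Perm.sign σ * ∏ r, star (W κ (σ r) r)) *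
          (W κ).det := by
        rw [sum_comm]
        refine sum_congr rfl fun κ _ => ?_
        rw [sum_mul]
        refine sum_congr rfl fun σ _ => ?_
        rw [hperm]
        simp only [W, Matrix.of_apply]
        ring
    _ = _ := by simp only [hconj]; rfl

end PermMixedDet

open scoped MatrixOrder in
theorem permMixedDet_nonneg {ι 𝕜 : Type*} [Fintype ι] [DecidableEq ι] [RCLike 𝕜]
    {h : ι → Matrix ι ι 𝕜} (hpsd : ∀ i, (h i).PosSemidef) : 0 ≤ permMixedDet h := by
  choose B hB using fun i => CStarAlgebra.nonneg_iff_eq_star_mul_self.mp (hpsd i).nonneg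
  rw [show h = fun i => (B i)ᴴ * B i from funext hB, permMixedDet_conjTranspose_mul_self]
  exact sum_nonneg fun κ _ => star_mul_self_nonneg _

theorem permMixedDet_update_mono {ι 𝕜 : Type*} [Fintype ι] [DecidableEq ι] [RCLike 𝕜]
    {h : ι → Matrix ι ι 𝕜} (hpsd : ∀ i, (h i).PosSemidef) (i : ι) {a b : Matrix ι ι 𝕜}
    (hab : (b - a).PosSemidef) :
    permMixedDet (Function.update h i a) ≤ permMixedDet (Function.update h i b) := by
  have hpsd' : ∀ j, (Function.update h i (b - a) j).PosSemidef :=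
    (Function.forall_update_iff h fun _ m => m.PosSemidef).mpr ⟨hab, fun j _ => hpsd j⟩
  rw [← add_sub_cancel a b, permMixedDet_update_add]
  exact le_add_of_nonneg_right (permMixedDet_nonneg hpsd')

theorem mixedDet_eq_inv_factorial_mul_permMixedDet (n : ℕ) [NeZero n]
    (h : Fin n → Matrix (Fin n) (Fin n) ℂ) :
    mixedDet n h = (n.factorial : ℂ)⁻¹ * permMixedDet h := by
  rw [mixedDet, ← sum_neg_one_pow_mul_det_sum, Fintype.card_fin, powerset_univ]
  congr 1
  -- the empty subset contributes `det 0 = 0`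
  refine sum_filter_of_ne fun S _ hS => nonempty_iff_ne_empty.mpr ?_
  rintro rfl
  simp at hS

theorem stmt7_general (n : ℕ) (h : Fin n → Matrix (Fin n) (Fin n) ℂ)
    (hpsd : ∀ i, (h i).PosSemidef) (i : Fin n)
    (a b : Matrix (Fin n) (Fin n) ℂ)
    (hab : (b - a).PosSemidef) :
    (mixedDet n (Function.update h i a)).re ≤
      (mixedDet n (Function.update h i b)).re := by
  have : NeZero n := NeZero.of_pos i.pos
  have hmono := mul_le_mul_of_nonneg_left (permMixedDet_update_mono hpsd i hab)
    (inv_nonneg.mpr (Nat.cast_nonneg _) : (0 : ℂ) ≤ (n.factorial : ℂ)⁻¹)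
  rw [← mixedDet_eq_inv_factorial_mul_permMixedDet,
    ← mixedDet_eq_inv_factorial_mul_permMixedDet] at hmono
  exact (Complex.le_def.mp hmono).1

/-- The mixed determinant of PSD Hermitian matrices is monotone in each argument. -/
theorem stmt7 (n : ℕ) (h : Fin n → Matrix (Fin n) (Fin n) ℂ)
    (hpsd : ∀ i, (h i).PosSemidef) (i : Fin n)
    (a b : Matrix (Fin n) (Fin n) ℂ) (ha : a.PosSemidef) (hb : b.PosSemidef)
    (hab : (b - a).PosSemidef) :
    (mixedDet n (Function.update h i a)).re ≤
      (mixedDet n (Function.update h i b)).re :=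
  stmt7_general n h hpsd i a b hab
end
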